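/- arXiv:1509.07803 — 4 statements merged into one kernel-verified Lean document; each statement's English description precedes it below -/
import Mathlib

section
/- Let A be a commutative ℂ-algebra equipped with a ℤ-grading 𝒜 making it a graded ℂ-algebra, let m be a nonzero integer, and let f ∈ A be homogeneous of degree m. Let ℓ, ℓ' ≥ 1 be integers such that ℓ' ≡ ℓ (mod m) or ℓ' ≡ −ℓ (mod m). Then the ℂ-algebras R_{f,ℓ} and R_{f,ℓ'} are isomorphic. -/
/-!
A `ℤ`-grading of `A` gives, for every `k : ℤ`, an automorphism of `A[T,T⁻¹]` fixing `T` and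
sending a homogeneous `a` of degree `d` to `T^(k*d) * a` (the graded twist; its inverse is the
twist by `-k`). It carries `T^ℓ * f - 1` to `T^(ℓ + k*m) * f - 1`, and `T ↦ T⁻¹` carries it to
`T^(-ℓ) * f - 1`. Every `ℓ'` congruent to `±ℓ` modulo `m` is reached by composing these.
-/

open LaurentPolynomial

namespace LaurentPolynomial

section GradedTwist

variable {R A : Type*} [CommSemiring R] [CommSemiring A] [Algebra R A]
  (𝒜 : ℤ → Submodule R A) [GradedAlgebra 𝒜]

noncomputable def gradedTwist (k : ℤ) : A →ₐ[R] A[T;T⁻¹] :=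
  (DirectSum.toAlgebra R (fun d ↦ 𝒜 d)
      (fun d ↦ LinearMap.mulLeft R (T (k * d)) ∘ₗ
        (IsScalarTower.toAlgHom R A A[T;T⁻¹]).toLinearMap ∘ₗ (𝒜 d).subtype)
      (by simp)
      (fun {i j} a b ↦ by
        simp only [LinearMap.comp_apply, Submodule.subtype_apply, SetLike.coe_gMul,
          LinearMap.mulLeft_apply, AlgHom.toLinearMap_apply, map_mul, mul_add, T_add]
        ring)).comp
    (DirectSum.decomposeAlgEquiv 𝒜).toAlgHom

variable {𝒜} in
theorem gradedTwist_of_mem (k : ℤ) {d : ℤ} {a : A} (ha : a ∈ 𝒜 d) :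
    gradedTwist 𝒜 k a = T (k * d) * C a := by
  simp only [gradedTwist, AlgHom.comp_apply, AlgEquiv.coe_toAlgHom,
    DirectSum.decomposeAlgEquiv_apply, DirectSum.decompose_of_mem 𝒜 ha]
  exact DirectSum.toAddMonoid_of _ _ _

theorem gradedTwist_zero : gradedTwist 𝒜 0 = IsScalarTower.toAlgHom R A A[T;T⁻¹] := by
  refine AlgHom.ext fun a ↦ ?_
  induction a using DirectSum.Decomposition.inductionOn 𝒜 with
  | zero => simp
  | homogeneous a => simp [gradedTwist_of_mem 0 a.2]
  | add a b ha hb => rw [map_add, map_add, ha, hb]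

noncomputable def gradedTwistHom (k : ℤ) : A[T;T⁻¹] →ₐ[R] A[T;T⁻¹] :=
  AddMonoidAlgebra.liftNCAlgHom (gradedTwist 𝒜 k) (AddMonoidAlgebra.of A ℤ)
    fun _ _ ↦ Commute.all _ _

theorem gradedTwistHom_C_mul_T (k n : ℤ) (a : A) :
    gradedTwistHom 𝒜 k (C a * T n) = gradedTwist 𝒜 k a * T n := by
  rw [← single_eq_C_mul_T]
  exact AddMonoidAlgebra.liftNC_single _ _ _ _

@[simp]
theorem gradedTwistHom_C (k : ℤ) (a : A) : gradedTwistHom 𝒜 k (C a) = gradedTwist 𝒜 k a := by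
  simpa using gradedTwistHom_C_mul_T 𝒜 k 0 a

@[simp]
theorem gradedTwistHom_T (k n : ℤ) : gradedTwistHom 𝒜 k (T n) = T n := by
  simpa using gradedTwistHom_C_mul_T 𝒜 k n 1

theorem gradedTwistHom_comp_gradedTwist (k k' : ℤ) :
    (gradedTwistHom 𝒜 k).comp (gradedTwist 𝒜 k') = gradedTwist 𝒜 (k + k') := by
  refine AlgHom.ext fun a ↦ ?_
  induction a using DirectSum.Decomposition.inductionOn 𝒜 with
  | zero => simp
  | homogeneous a =>
    simp only [AlgHom.comp_apply, gradedTwist_of_mem _ a.2, map_mul, gradedTwistHom_T,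
      gradedTwistHom_C, ← mul_assoc, ← T_add, add_mul, add_comm]
  | add a b ha hb => rw [map_add, map_add, ha, hb]

theorem gradedTwistHom_comp_gradedTwistHom (k k' : ℤ) :
    (gradedTwistHom 𝒜 k).comp (gradedTwistHom 𝒜 k') = gradedTwistHom 𝒜 (k + k') := by
  refine AlgHom.ext fun p ↦ ?_
  induction p using LaurentPolynomial.induction_on' with
  | add p q hp hq => rw [map_add, map_add, hp, hq]
  | C_mul_T n a =>
    rw [AlgHom.comp_apply, gradedTwistHom_C_mul_T, map_mul, gradedTwistHom_T,
      ← AlgHom.comp_apply, gradedTwistHom_comp_gradedTwist, gradedTwistHom_C_mul_T]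

theorem gradedTwistHom_zero : gradedTwistHom 𝒜 0 = AlgHom.id R A[T;T⁻¹] := by
  refine AlgHom.ext fun p ↦ ?_
  induction p using LaurentPolynomial.induction_on' with
  | add p q hp hq => rw [map_add, map_add, hp, hq]
  | C_mul_T n a => simp [gradedTwistHom_C_mul_T, gradedTwist_zero]

noncomputable def gradedTwistEquiv (k : ℤ) : A[T;T⁻¹] ≃ₐ[R] A[T;T⁻¹] :=
  AlgEquiv.ofAlgHom (gradedTwistHom 𝒜 k) (gradedTwistHom 𝒜 (-k))
    (by rw [gradedTwistHom_comp_gradedTwistHom, add_neg_cancel, gradedTwistHom_zero])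
    (by rw [gradedTwistHom_comp_gradedTwistHom, neg_add_cancel, gradedTwistHom_zero])

@[simp]
theorem gradedTwistEquiv_apply (k : ℤ) (p : A[T;T⁻¹]) :
    gradedTwistEquiv 𝒜 k p = gradedTwistHom 𝒜 k p :=
  rfl

variable {𝒜} in
theorem gradedTwistHom_T_mul_C_of_mem (k n : ℤ) {m : ℤ} {f : A} (hf : f ∈ 𝒜 m) :
    gradedTwistHom 𝒜 k (T n * C f) = T (n + k * m) * C f := by
  rw [map_mul, gradedTwistHom_T, gradedTwistHom_C, gradedTwist_of_mem k hf, ← mul_assoc, ← T_add]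

end GradedTwist

end LaurentPolynomial

noncomputable def Ideal.quotientSpanSingletonAlgEquiv {R S S' : Type*} [CommSemiring R]
    [CommRing S] [CommRing S'] [Algebra R S] [Algebra R S'] (e : S ≃ₐ[R] S') {x : S} {y : S'}
    (h : e x = y) : (S ⧸ Ideal.span {x}) ≃ₐ[R] (S' ⧸ Ideal.span {y}) :=
  Ideal.quotientEquivAlg _ _ e (by rw [Ideal.map_span, Set.image_singleton, RingHom.coe_coe, h])

theorem laurent_hypersurfaces_iso_of_cong_general {A : Type*} [CommRing A] [Algebra ℂ A]
    (𝒜 : ℤ → Submodule ℂ A) [GradedAlgebra 𝒜]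
    (m : ℤ) (f : A) (hf : f ∈ 𝒜 m)
    (ℓ ℓ' : ℤ)
    (hcong : ℓ' ≡ ℓ [ZMOD m] ∨ ℓ' ≡ -ℓ [ZMOD m]) :
    Nonempty ((LaurentPolynomial A ⧸ Ideal.span {T ℓ * C f - 1}) ≃ₐ[ℂ]
      (LaurentPolynomial A ⧸ Ideal.span {T ℓ' * C f - 1})) := by
  rcases hcong with h | h
  · obtain ⟨k, hk⟩ := h.symm.dvd
    refine ⟨Ideal.quotientSpanSingletonAlgEquiv (gradedTwistEquiv 𝒜 k) ?_⟩
    rw [map_sub, map_one, gradedTwistEquiv_apply, gradedTwistHom_T_mul_C_of_mem k ℓ hf]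
    congr 3
    linarith
  · obtain ⟨k, hk⟩ := h.symm.dvd
    refine ⟨Ideal.quotientSpanSingletonAlgEquiv
      ((invert.restrictScalars ℂ).trans (gradedTwistEquiv 𝒜 k)) ?_⟩
    rw [AlgEquiv.trans_apply, map_sub, map_one, AlgEquiv.restrictScalars_apply, map_mul, invert_T,
      invert_C, map_sub, map_one, gradedTwistEquiv_apply, gradedTwistHom_T_mul_C_of_mem k _ hf]
    congr 3
    linarith

/-- **Proposition 1(1).** Let `A` be a commutative `ℂ`-algebra with a `ℤ`-grading `𝒜`,
let `m ≠ 0` and let `f ∈ A` be homogeneous of degree `m`.  If `ℓ, ℓ' ≥ 1` satisfy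
`ℓ' ≡ ℓ (mod m)` or `ℓ' ≡ -ℓ (mod m)`, then the coordinate rings
`R_{f,ℓ} = A[T,T⁻¹]/(T^ℓ f - 1)` and `R_{f,ℓ'} = A[T,T⁻¹]/(T^ℓ' f - 1)` are
isomorphic as `ℂ`-algebras. -/
theorem laurent_hypersurfaces_iso_of_cong {A : Type*} [CommRing A] [Algebra ℂ A]
    (𝒜 : ℤ → Submodule ℂ A) [GradedAlgebra 𝒜]
    (m : ℤ) (hm : m ≠ 0) (f : A) (hf : f ∈ 𝒜 m)
    (ℓ ℓ' : ℤ) (hℓ : 1 ≤ ℓ) (hℓ' : 1 ≤ ℓ')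
    (hcong : ℓ' ≡ ℓ [ZMOD m] ∨ ℓ' ≡ -ℓ [ZMOD m]) :
    Nonempty ((LaurentPolynomial A ⧸ Ideal.span {T ℓ * C f - 1}) ≃ₐ[ℂ]
      (LaurentPolynomial A ⧸ Ideal.span {T ℓ' * C f - 1})) :=
  laurent_hypersurfaces_iso_of_cong_general 𝒜 m f hf ℓ ℓ' hcong
end

section
/- Let A be a commutative ℂ-algebra equipped with a ℤ-grading 𝒜 making it a graded ℂ-algebra, let m be a nonzero integer, and let f ∈ A be homogeneous of degree m. Let ℓ, ℓ' ≥ 1 be integers with gcd(ℓ, m) = gcd(ℓ', m). Then the Laurent polynomial rings R_{f,ℓ}[U,U⁻¹] and R_{f,ℓ'}[U,U⁻¹] (i.e. LaurentPolynomial R_{f,ℓ} and LaurentPolynomial R_{f,ℓ'}) are isomorphic as ℂ-algebras. -/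
/-!
A ring map out of `R_{f,ℓ}[U, U⁻¹]` is a ring map `φ` out of `A` together with two units `t, u`
satisfying `t ^ ℓ * φ f = 1`. Twisting the inclusion of `A` by its grading, the assignment
`x ↦ x t^{kp} u^{kq}` for `x ∈ A_k`, `T ↦ t^a u^b`, `U ↦ t^c u^d` therefore defines a map
`R_{f,ℓ}[U, U⁻¹] → R_{f,ℓ'}[U, U⁻¹]` whenever `aℓ + pm = ℓ'` and `bℓ + qm = 0`. These maps
compose like the affine maps `v ↦ ρ v + k w` of `ℤ²` they are built from (`ρ` having columns
`(a, b)` and `(c, d)`, `w = (p, q)`), so an invertible `ρ` yields an isomorphism.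
If `g = gcd(ℓ, m) = gcd(ℓ', m)` and `x ℓ/g + y m/g = 1`, then `(a, b) = (x ℓ'/g, m/g)` and
`(p, q) = (y ℓ'/g, -ℓ/g)` work, and `(a, b)` is primitive, i.e. the first column of some
`ρ ∈ SL₂(ℤ)`.
-/

open LaurentPolynomial

noncomputable section

theorem Int.exists_isCoprime_mul_add_mul_eq {ℓ ℓ' m : ℤ} (h : Int.gcd ℓ m = Int.gcd ℓ' m) :
    ∃ a b p q : ℤ, IsCoprime a b ∧ a * ℓ + p * m = ℓ' ∧ b * ℓ + q * m = 0 := by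
  rcases eq_or_ne (Int.gcd ℓ m) 0 with h0 | h0
  · obtain ⟨rfl, rfl⟩ := Int.gcd_eq_zero_iff.mp h0
    obtain ⟨rfl, -⟩ := Int.gcd_eq_zero_iff.mp (h ▸ h0)
    exact ⟨1, 0, 0, 0, isCoprime_one_left, by ring, by ring⟩
  obtain ⟨ℓ₁, m₁, h₁, hℓ, hm⟩ := Int.exists_gcd_one (Nat.pos_of_ne_zero h0)
  obtain ⟨ℓ₁', m₁', h₁', hℓ', hm'⟩ := Int.exists_gcd_one (h ▸ Nat.pos_of_ne_zero h0)
  rw [← h] at hℓ' hm'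
  obtain rfl : m₁' = m₁ := mul_right_cancel₀ (by exact_mod_cast h0) (hm'.symm.trans hm)
  obtain ⟨x, y, hxy⟩ := Int.isCoprime_iff_gcd_eq_one.mpr h₁
  refine ⟨x * ℓ₁', m₁', y * ℓ₁', -ℓ₁, ?_, ?_, ?_⟩
  · exact IsCoprime.mul_left ⟨ℓ₁, y, by linear_combination hxy⟩
      (Int.isCoprime_iff_gcd_eq_one.mpr h₁')
  · linear_combination (ℓ₁' * Int.gcd ℓ m) * hxy + (x * ℓ₁') * hℓ + (y * ℓ₁') * hm - hℓ'
  · linear_combination m₁' * hℓ - ℓ₁ * hm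

theorem exists_addEquiv_apply_one_zero {a b : ℤ} (hab : IsCoprime a b) :
    ∃ e : ℤ × ℤ ≃+ ℤ × ℤ, e (1, 0) = (a, b) := by
  obtain ⟨c, d, hcd⟩ := hab
  refine ⟨{ toFun := fun v => (a * v.1 - d * v.2, b * v.1 + c * v.2)
            invFun := fun v => (c * v.1 + d * v.2, a * v.2 - b * v.1)
            left_inv := fun v => ?_
            right_inv := fun v => ?_
            map_add' := fun v w => ?_ }, by simp⟩
  · ext
    · linear_combination v.1 * hcd
    · linear_combination v.2 * hcd
  · ext
    · linear_combination v.1 * hcd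
    · linear_combination v.2 * hcd
  · ext <;> simp only [Prod.fst_add, Prod.snd_add] <;> ring

theorem exists_addEquiv_add_smul_eq {ℓ ℓ' m : ℤ} (h : Int.gcd ℓ m = Int.gcd ℓ' m) :
    ∃ (e : ℤ × ℤ ≃+ ℤ × ℤ) (w : ℤ × ℤ), e (ℓ, 0) + m • w = (ℓ', 0) := by
  obtain ⟨a, b, p, q, hab, h₁, h₂⟩ := Int.exists_isCoprime_mul_add_mul_eq h
  obtain ⟨e, he⟩ := exists_addEquiv_apply_one_zero hab
  refine ⟨e, (p, q), ?_⟩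
  have hℓ : ((ℓ, 0) : ℤ × ℤ) = ℓ • (1, 0) := by simp
  rw [hℓ, map_zsmul, he]
  ext <;> simp <;> linarith

section LatticePow

variable {M : Type*} [CommMonoid M]

def latticePow (t u : Mˣ) (v : ℤ × ℤ) : Mˣ := t ^ v.1 * u ^ v.2

@[simp] theorem latticePow_one_zero (t u : Mˣ) : latticePow t u (1, 0) = t := by
  simp [latticePow]

@[simp] theorem latticePow_zero_one (t u : Mˣ) : latticePow t u (0, 1) = u := by
  simp [latticePow]

@[simp] theorem latticePow_zero (t u : Mˣ) : latticePow t u 0 = 1 := by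
  simp [latticePow]

theorem latticePow_add (t u : Mˣ) (v w : ℤ × ℤ) :
    latticePow t u (v + w) = latticePow t u v * latticePow t u w := by
  simp only [latticePow, Prod.fst_add, Prod.snd_add, zpow_add]
  exact mul_mul_mul_comm _ _ _ _

theorem latticePow_zsmul (t u : Mˣ) (n : ℤ) (v : ℤ × ℤ) :
    latticePow t u (n • v) = latticePow t u v ^ n := by
  simp only [latticePow, Prod.smul_fst, Prod.smul_snd, smul_eq_mul, mul_zpow, zpow_mul']

theorem map_latticePow {N : Type*} [CommMonoid N] (g : M →* N) (t u : Mˣ) (v : ℤ × ℤ) :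
    Units.map g (latticePow t u v) = latticePow (Units.map g t) (Units.map g u) v := by
  simp [latticePow]

theorem latticePow_latticePow_map (t u : Mˣ) (ρ : ℤ × ℤ →+ ℤ × ℤ) (v : ℤ × ℤ) :
    latticePow (latticePow t u (ρ (1, 0))) (latticePow t u (ρ (0, 1))) v =
      latticePow t u (ρ v) := by
  have hv : v = v.1 • ((1 : ℤ), (0 : ℤ)) + v.2 • ((0 : ℤ), (1 : ℤ)) := by ext <;> simp
  conv_rhs => rw [hv, map_add, map_zsmul, map_zsmul, latticePow_add, latticePow_zsmul,
    latticePow_zsmul]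
  rfl

end LatticePow

namespace LaurentPolynomial

variable {R : Type*} [CommSemiring R]

theorem ringHom_ext {S : Type*} [Semiring S] {g₁ g₂ : R[T;T⁻¹] →+* S}
    (hC : ∀ r, g₁ (C r) = g₂ (C r)) (hT : g₁ (T 1) = g₂ (T 1)) : g₁ = g₂ :=
  IsLocalization.ringHom_ext (Submonoid.powers Polynomial.X) <|
    Polynomial.ringHom_ext (f := g₁.comp (algebraMap (Polynomial R) R[T;T⁻¹]))
      (fun r => by simpa using hC r) (by simpa using hT)

def unitT : R[T;T⁻¹]ˣ := (isUnit_T 1).unit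

theorem val_unitT_zpow (n : ℤ) : ↑(unitT ^ n : R[T;T⁻¹]ˣ) = (T n : R[T;T⁻¹]) := by
  have h : eval₂ C (unitT : R[T;T⁻¹]ˣ) = RingHom.id _ :=
    ringHom_ext (fun r => eval₂_C _ _ r) (by simp [unitT])
  rw [← eval₂_T C, h, RingHom.id_apply]

end LaurentPolynomial

namespace GradedRing

variable {ι A σ S : Type*} [DecidableEq ι] [AddMonoid ι] [Semiring A] [SetLike σ A]
  [AddSubmonoidClass σ A] (𝒜 : ι → σ) [GradedRing 𝒜]

theorem ringHom_ext [Semiring S] {g₁ g₂ : A →+* S} (h : ∀ i, ∀ a ∈ 𝒜 i, g₁ a = g₂ a) :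
    g₁ = g₂ := by
  ext a
  induction a using DirectSum.Decomposition.inductionOn 𝒜 with
  | zero => simp
  | homogeneous a => exact h _ _ a.2
  | add a b ha hb => rw [map_add, map_add, ha, hb]

variable [CommSemiring S]

def twist (φ : A →+* S) (χ : Multiplicative ι →* S) : A →+* S :=
  (DirectSum.toSemiring
      (fun i => (AddMonoidHom.mulRight (χ (.ofAdd i))).comp
        ((φ : A →+ S).comp (AddSubmonoidClass.subtype (𝒜 i))))
      (by simp)
      (fun {i j} a b => by simp [mul_mul_mul_comm])).comp
    (DirectSum.decomposeRingEquiv 𝒜).toRingHom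

theorem twist_apply_of_mem (φ : A →+* S) (χ : Multiplicative ι →* S) {i : ι} {a : A}
    (ha : a ∈ 𝒜 i) : twist 𝒜 φ χ a = φ a * χ (.ofAdd i) := by
  simp [twist, DirectSum.decomposeRingEquiv, DirectSum.decompose_of_mem 𝒜 ha]

end GradedRing

/-- `R_{f,ℓ}[U, U⁻¹]`, in which `Cylinder.t` and `Cylinder.u` are the classes of `T` and `U`.
It is a `def` rather than an `abbrev` because instance search does not find
`CommGroup (Cylinder f ℓ)ˣ` through the nested Laurent polynomial rings. -/
def Cylinder {A : Type*} [CommRing A] (f : A) (ℓ : ℤ) : Type _ :=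
  (A[T;T⁻¹] ⧸ Ideal.span {T ℓ * C f - 1})[T;T⁻¹]

namespace Cylinder

section Lift

variable {A : Type*} [CommRing A] (f : A) (ℓ : ℤ)

instance : CommRing (Cylinder f ℓ) :=
  inferInstanceAs (CommRing (_ ⧸ Ideal.span {T ℓ * C f - 1})[T;T⁻¹])

instance {R : Type*} [CommSemiring R] [Algebra R A] : Algebra R (Cylinder f ℓ) :=
  inferInstanceAs (Algebra R (_ ⧸ Ideal.span {T ℓ * C f - 1})[T;T⁻¹])

def mk : A[T;T⁻¹] →+* Cylinder f ℓ := C.comp (Ideal.Quotient.mk _)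

def ι : A →+* Cylinder f ℓ := (mk f ℓ).comp C

def t : (Cylinder f ℓ)ˣ := Units.map (mk f ℓ : A[T;T⁻¹] →* Cylinder f ℓ) unitT

def u : (Cylinder f ℓ)ˣ := unitT

theorem val_t_zpow (n : ℤ) : ↑(t f ℓ ^ n) = mk f ℓ (T n) := by
  rw [t, ← map_zpow, Units.coe_map, val_unitT_zpow]
  rfl

theorem val_t_zpow_mul_ι : ↑(t f ℓ ^ ℓ) * ι f ℓ f = 1 := by
  have h : Ideal.Quotient.mk (Ideal.span {T ℓ * C f - 1}) (T ℓ * C f - 1) = 0 :=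
    Ideal.Quotient.eq_zero_iff_mem.mpr (Ideal.mem_span_singleton_self _)
  rw [map_sub, map_one, sub_eq_zero] at h
  rw [val_t_zpow, ι, RingHom.comp_apply, ← map_mul]
  exact (congrArg C h).trans (map_one C)

variable {f ℓ}

theorem ringHom_ext {S : Type*} [Semiring S] {g₁ g₂ : Cylinder f ℓ →+* S}
    (hι : g₁.comp (ι f ℓ) = g₂.comp (ι f ℓ)) (ht : g₁ ↑(t f ℓ) = g₂ ↑(t f ℓ))
    (hu : g₁ ↑(u f ℓ) = g₂ ↑(u f ℓ)) : g₁ = g₂ := by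
  refine LaurentPolynomial.ringHom_ext (fun r => ?_) hu
  obtain ⟨p, rfl⟩ := Ideal.Quotient.mk_surjective r
  have hmk : g₁.comp (mk f ℓ) = g₂.comp (mk f ℓ) :=
    LaurentPolynomial.ringHom_ext (fun a => congrArg (· a) hι) ht
  exact congrArg (· p) hmk

variable {S : Type*} [CommRing S]

def lift (φ : A →+* S) (t u : Sˣ) (h : ↑(t ^ ℓ) * φ f = 1) : Cylinder f ℓ →+* S :=
  eval₂ (Ideal.Quotient.lift _ (eval₂ φ t) fun a ha => by
    obtain ⟨b, rfl⟩ := Ideal.mem_span_singleton'.mp ha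
    rw [map_mul, map_sub, map_mul, eval₂_T, eval₂_C, h, map_one, sub_self, mul_zero]) u

@[simp] theorem lift_ι (φ : A →+* S) (t u : Sˣ) (h : ↑(t ^ ℓ) * φ f = 1) (a : A) :
    lift φ t u h (ι f ℓ a) = φ a := by
  change eval₂ _ u (C (Ideal.Quotient.mk _ (C a))) = φ a
  simp

@[simp] theorem lift_t (φ : A →+* S) (t u : Sˣ) (h : ↑(t ^ ℓ) * φ f = 1) :
    Units.map (lift φ t u h : Cylinder f ℓ →* S) (Cylinder.t f ℓ) = t := by
  ext
  change lift φ t u h ↑(Cylinder.t f ℓ) = ↑t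
  rw [← zpow_one (Cylinder.t f ℓ), val_t_zpow]
  change eval₂ _ u (C (Ideal.Quotient.mk _ (T 1))) = ↑t
  simp

@[simp] theorem lift_u (φ : A →+* S) (t u : Sˣ) (h : ↑(t ^ ℓ) * φ f = 1) :
    Units.map (lift φ t u h : Cylinder f ℓ →* S) (Cylinder.u f ℓ) = u := by
  ext
  change eval₂ _ u (T 1) = ↑u
  simp

end Lift

section Map

variable {A σ : Type*} [CommRing A] [SetLike σ A] [AddSubmonoidClass σ A] (𝒜 : ℤ → σ)
  [GradedRing 𝒜]

def monomial (f : A) (ℓ : ℤ) (v : ℤ × ℤ) : (Cylinder f ℓ)ˣ :=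
  latticePow (t f ℓ) (u f ℓ) v

def twistBy (f : A) (ℓ : ℤ) (w : ℤ × ℤ) : A →+* Cylinder f ℓ :=
  GradedRing.twist 𝒜 (ι f ℓ) ((Units.coeHom _).comp (zpowersHom _ (monomial f ℓ w)))

variable {f : A} {m ℓ ℓ' ℓ'' : ℤ}

theorem monomial_add (v w : ℤ × ℤ) :
    monomial f ℓ (v + w) = monomial f ℓ v * monomial f ℓ w :=
  latticePow_add _ _ v w

@[simp] theorem monomial_one_zero : monomial f ℓ (1, 0) = t f ℓ := latticePow_one_zero _ _

@[simp] theorem monomial_zero_one : monomial f ℓ (0, 1) = u f ℓ := latticePow_zero_one _ _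

@[simp] theorem monomial_zero : monomial f ℓ 0 = 1 := latticePow_zero _ _

theorem twistBy_of_mem (w : ℤ × ℤ) {k : ℤ} {a : A} (ha : a ∈ 𝒜 k) :
    twistBy 𝒜 f ℓ w a = ι f ℓ a * ↑(monomial f ℓ (k • w)) := by
  rw [twistBy, GradedRing.twist_apply_of_mem 𝒜 _ _ ha, monomial, monomial, latticePow_zsmul]
  rfl

variable {𝒜} (hf : f ∈ 𝒜 m)

def map (ρ : ℤ × ℤ →+ ℤ × ℤ) (w : ℤ × ℤ) (h : ρ (ℓ, 0) + m • w = (ℓ', 0)) :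
    Cylinder f ℓ →+* Cylinder f ℓ' :=
  lift (twistBy 𝒜 f ℓ' w) (monomial f ℓ' (ρ (1, 0))) (monomial f ℓ' (ρ (0, 1))) <| by
    have hρ : ℓ • ρ (1, 0) + m • w = (ℓ', 0) := by
      rw [← map_zsmul, ← h]
      simp
    rw [twistBy_of_mem 𝒜 w hf, ← mul_assoc, mul_right_comm, ← Units.val_mul, monomial, monomial,
      ← latticePow_zsmul, ← latticePow_add, hρ]
    simpa [latticePow] using val_t_zpow_mul_ι f ℓ'

theorem map_ι_of_mem (ρ : ℤ × ℤ →+ ℤ × ℤ) (w : ℤ × ℤ) (h : ρ (ℓ, 0) + m • w = (ℓ', 0))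
    {k : ℤ} {a : A} (ha : a ∈ 𝒜 k) :
    map hf ρ w h (ι f ℓ a) = ι f ℓ' a * ↑(monomial f ℓ' (k • w)) := by
  rw [map, lift_ι, twistBy_of_mem 𝒜 w ha]

theorem map_monomial (ρ : ℤ × ℤ →+ ℤ × ℤ) (w : ℤ × ℤ) (h : ρ (ℓ, 0) + m • w = (ℓ', 0))
    (v : ℤ × ℤ) :
    Units.map (map hf ρ w h : Cylinder f ℓ →* Cylinder f ℓ') (monomial f ℓ v) =
      monomial f ℓ' (ρ v) := by
  rw [monomial, map_latticePow, map, lift_t, lift_u, monomial, monomial, monomial,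
    latticePow_latticePow_map]

theorem map_val_monomial (ρ : ℤ × ℤ →+ ℤ × ℤ) (w : ℤ × ℤ) (h : ρ (ℓ, 0) + m • w = (ℓ', 0))
    (v : ℤ × ℤ) : map hf ρ w h ↑(monomial f ℓ v) = ↑(monomial f ℓ' (ρ v)) :=
  congrArg Units.val (map_monomial hf ρ w h v)

theorem map_comp_map (ρ ρ' : ℤ × ℤ →+ ℤ × ℤ) (w w' : ℤ × ℤ) (h : ρ (ℓ, 0) + m • w = (ℓ', 0))
    (h' : ρ' (ℓ', 0) + m • w' = (ℓ'', 0)) :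
    (map hf ρ' w' h').comp (map hf ρ w h) = map hf (ρ'.comp ρ) (w' + ρ' w) (by
      rw [← h', ← h, AddMonoidHom.comp_apply, map_add, map_zsmul, smul_add]; abel) := by
  refine ringHom_ext (GradedRing.ringHom_ext 𝒜 fun k a ha => ?_) ?_ ?_
  · simp only [RingHom.comp_apply, map_ι_of_mem hf _ _ _ ha, map_mul, map_val_monomial, smul_add,
      map_zsmul, monomial_add, Units.val_mul, mul_assoc]
  · simp only [← monomial_one_zero, RingHom.comp_apply, map_val_monomial, AddMonoidHom.comp_apply]
  · simp only [← monomial_zero_one, RingHom.comp_apply, map_val_monomial, AddMonoidHom.comp_apply]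

theorem map_eq_id (ρ : ℤ × ℤ →+ ℤ × ℤ) (w : ℤ × ℤ) (h : ρ (ℓ, 0) + m • w = (ℓ, 0))
    (hρ : ρ = AddMonoidHom.id _) (hw : w = 0) : map hf ρ w h = RingHom.id _ := by
  subst hρ hw
  refine ringHom_ext (GradedRing.ringHom_ext 𝒜 fun k a ha => ?_) ?_ ?_
  · simp [map_ι_of_mem hf _ _ _ ha]
  · simp only [← monomial_one_zero, map_val_monomial, AddMonoidHom.id_apply, RingHom.id_apply]
  · simp only [← monomial_zero_one, map_val_monomial, AddMonoidHom.id_apply, RingHom.id_apply]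

end Map

section AlgEquiv

variable {R A : Type*} [CommSemiring R] [CommRing A] [Algebra R A] {𝒜 : ℤ → Submodule R A}
  [GradedAlgebra 𝒜] {f : A} {m ℓ ℓ' : ℤ} (hf : f ∈ 𝒜 m)

theorem map_algebraMap (ρ : ℤ × ℤ →+ ℤ × ℤ) (w : ℤ × ℤ) (h : ρ (ℓ, 0) + m • w = (ℓ', 0))
    (r : R) : map hf ρ w h (algebraMap R (Cylinder f ℓ) r) = algebraMap R (Cylinder f ℓ') r := by
  change map hf ρ w h (ι f ℓ (algebraMap R A r)) = ι f ℓ' (algebraMap R A r)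
  rw [map_ι_of_mem hf ρ w h (SetLike.algebraMap_mem_graded 𝒜 r), zero_smul, monomial_zero,
    Units.val_one, mul_one]

def algEquiv (e : ℤ × ℤ ≃+ ℤ × ℤ) (w : ℤ × ℤ) (h : e (ℓ, 0) + m • w = (ℓ', 0)) :
    Cylinder f ℓ ≃ₐ[R] Cylinder f ℓ' :=
  have h' : e.symm (ℓ', 0) + m • -e.symm w = (ℓ, 0) := by
    rw [← h, map_add, map_zsmul, e.symm_apply_apply, smul_neg, add_neg_cancel_right]
  AlgEquiv.ofRingEquiv (f := RingEquiv.ofRingHom (map hf e w h) (map hf e.symm (-e.symm w) h')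
      ((map_comp_map hf _ _ _ _ h' h).trans (map_eq_id hf _ _ _ (by ext <;> simp) (by simp)))
      ((map_comp_map hf _ _ _ _ h h').trans (map_eq_id hf _ _ _ (by ext <;> simp) (by simp))))
    (map_algebraMap hf e w h)

end AlgEquiv

end Cylinder

end

theorem laurent_cylinders_iso_of_gcd_eq_general {A : Type*} [CommRing A] [Algebra ℂ A]
    (𝒜 : ℤ → Submodule ℂ A) [GradedAlgebra 𝒜]
    (m : ℤ) (f : A) (hf : f ∈ 𝒜 m)
    (ℓ ℓ' : ℤ)
    (hgcd : Int.gcd ℓ m = Int.gcd ℓ' m) :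
    Nonempty ((LaurentPolynomial (LaurentPolynomial A ⧸ Ideal.span {T ℓ * C f - 1})) ≃ₐ[ℂ]
      (LaurentPolynomial (LaurentPolynomial A ⧸ Ideal.span {T ℓ' * C f - 1}))) := by
  obtain ⟨e, w, h⟩ := exists_addEquiv_add_smul_eq hgcd
  exact ⟨Cylinder.algEquiv hf e w h⟩

/-- **Proposition 1(2).** Let `A` be a commutative `ℂ`-algebra with a `ℤ`-grading `𝒜`,
let `m ≠ 0` and let `f ∈ A` be homogeneous of degree `m`.  If `ℓ, ℓ' ≥ 1` satisfy
`gcd(ℓ, m) = gcd(ℓ', m)`, then the `ℂ*`-cylinders over the hypersurfaces `{T^ℓ f = 1}`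
and `{T^ℓ' f = 1}` are isomorphic, i.e. the Laurent polynomial rings over
`R_{f,ℓ} = A[T,T⁻¹]/(T^ℓ f - 1)` and `R_{f,ℓ'} = A[T,T⁻¹]/(T^ℓ' f - 1)` are
isomorphic as `ℂ`-algebras. -/
theorem laurent_cylinders_iso_of_gcd_eq {A : Type*} [CommRing A] [Algebra ℂ A]
    (𝒜 : ℤ → Submodule ℂ A) [GradedAlgebra 𝒜]
    (m : ℤ) (hm : m ≠ 0) (f : A) (hf : f ∈ 𝒜 m)
    (ℓ ℓ' : ℤ) (hℓ : 1 ≤ ℓ) (hℓ' : 1 ≤ ℓ')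
    (hgcd : Int.gcd ℓ m = Int.gcd ℓ' m) :
    Nonempty ((LaurentPolynomial (LaurentPolynomial A ⧸ Ideal.span {T ℓ * C f - 1})) ≃ₐ[ℂ]
      (LaurentPolynomial (LaurentPolynomial A ⧸ Ideal.span {T ℓ' * C f - 1}))) :=
  laurent_cylinders_iso_of_gcd_eq_general 𝒜 m f hf ℓ ℓ' hgcd
end

section
/- Let n ≥ 1, m ≥ 2 and ℓ ≥ 1 be integers, and let R_{n,m,ℓ} = ℂ[x₁,…,xₙ,y,z,t]/(t^ℓ(x₁²⋯xₙ²·z − y^m) − 1). Then R_{n,m,ℓ} is a smooth ℂ-algebra (i.e. Algebra.Smooth ℂ R_{n,m,ℓ}: it is of finite presentation and formally smooth over ℂ). -/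
/-!
Jacobian criterion for a hypersurface: if `∂g/∂xᵢ` is a unit modulo `g`, the one-relation
presentation of `R[x]/(g)` is submersive, so the quotient is standard smooth. For
`g = t^ℓ f - 1` with `f` free of `t`, `∂g/∂t = ℓ t^(ℓ-1) f`, a unit modulo `g` because
`t · t^(ℓ-1) f = t^ℓ f = 1` there and `ℓ ≠ 0` in `ℂ`.
-/

open MvPolynomial

/-- `R_{n,m,ℓ} = ℂ[x₁,…,xₙ,y,z,t]/(t^ℓ(x₁²⋯xₙ²·z − y^m) − 1)`, the coordinate ring of
the hypersurface `X_{n,m,ℓ} ⊂ 𝔸^{n+3}`; the variables `x₁,…,xₙ` are indexed by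
`0,…,n-1`, `y` by `n`, `z` by `n+1` and `t` by `n+2` in `Fin (n+3)`. -/
noncomputable abbrev negKodairaRing (n m ℓ : ℕ) : Type :=
  MvPolynomial (Fin (n + 3)) ℂ ⧸ Ideal.span
    {(X (⟨n + 2, by omega⟩ : Fin (n + 3)) : MvPolynomial (Fin (n + 3)) ℂ) ^ ℓ *
      ((∏ i : Fin n, (X (Fin.castAdd 3 i)) ^ 2) * X (⟨n + 1, by omega⟩ : Fin (n + 3)) -
        (X (⟨n, by omega⟩ : Fin (n + 3))) ^ m) - 1}

namespace MvPolynomial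

variable {R σ : Type*} [CommRing R] [Finite σ]

theorem smooth_quotient_span_singleton_of_isUnit_pderiv (g : MvPolynomial σ R) (i : σ)
    (h : IsUnit (Ideal.Quotient.mk (Ideal.span {g}) (pderiv i g))) :
    Algebra.Smooth R (MvPolynomial σ R ⧸ Ideal.span {g}) := by
  -- `naive` presents quotients by ideals of the form `span (range v)`.
  rw [← Set.range_const (ι := Unit) (c := g)] at h ⊢
  let P : Algebra.SubmersivePresentation R _ σ Unit :=
    { Algebra.PreSubmersivePresentation.naive (v := fun _ : Unit => g) (fun _ => i)
        (Function.injective_of_subsingleton _) with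
      jacobian_isUnit := by
        rw [Algebra.PreSubmersivePresentation.jacobian_eq_jacobiMatrix_det, Matrix.det_unique,
          Algebra.PreSubmersivePresentation.jacobiMatrix_naive]
        exact h }
  have := P.isStandardSmooth
  infer_instance

theorem smooth_quotient_X_pow_mul_sub_one {f : MvPolynomial σ R} {i : σ} (ℓ : ℕ)
    (hℓ : IsUnit (ℓ : R)) (hf : pderiv i f = 0) :
    Algebra.Smooth R (MvPolynomial σ R ⧸ Ideal.span {X i ^ ℓ * f - 1}) := by
  set I := Ideal.span {X i ^ ℓ * f - 1}
  have hrel : Ideal.Quotient.mk I (X i) ^ ℓ * Ideal.Quotient.mk I f = 1 := by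
    rw [← map_pow, ← map_mul, ← sub_eq_zero, ← map_one (Ideal.Quotient.mk I), ← map_sub,
      Ideal.Quotient.eq_zero_iff_mem]
    exact Ideal.mem_span_singleton_self _
  have hℓI : IsUnit (ℓ : MvPolynomial σ R ⧸ I) := by
    simpa using hℓ.map (algebraMap R (MvPolynomial σ R ⧸ I))
  have hderiv :
      pderiv i (X i ^ ℓ * f - 1) = (ℓ : MvPolynomial σ R) * (X i ^ (ℓ - 1) * f) := by
    simp only [map_sub, Derivation.leibniz, Derivation.leibniz_pow, pderiv_X_self, hf,
      Derivation.map_one_eq_zero, smul_eq_mul, nsmul_eq_mul]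
    ring
  refine smooth_quotient_span_singleton_of_isUnit_pderiv _ i ?_
  rw [hderiv, map_mul, map_natCast]
  cases ℓ with
  | zero => simpa using hℓI
  | succ k =>
    refine hℓI.mul (.of_mul_eq_one (Ideal.Quotient.mk I (X i)) ?_)
    rw [Nat.add_sub_cancel, map_mul, map_pow, ← hrel]
    ring

end MvPolynomial

theorem negKodairaRing_smooth_general (n m ℓ : ℕ) (hℓ : 1 ≤ ℓ) :
    Algebra.Smooth ℂ (negKodairaRing n m ℓ) := by
  let t : Fin (n + 3) := ⟨n + 2, by omega⟩
  have hprod :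
      pderiv t (∏ i : Fin n, X (Fin.castAdd 3 i) ^ 2 : MvPolynomial (Fin (n + 3)) ℂ) = 0 :=
    Finset.prod_induction _ (fun q => pderiv t q = 0) (fun a b ha hb => by simp [ha, hb])
      pderiv_one (fun j _ => by
        rw [Derivation.leibniz_pow, pderiv_X_of_ne (Fin.ne_of_lt (show j.val < n + 2 by omega)),
          smul_zero, smul_zero])
  refine smooth_quotient_X_pow_mul_sub_one ℓ (Nat.cast_ne_zero.mpr (by omega)).isUnit ?_
  simp [t, Fin.ext_iff, hprod]

/-- **Lemma (smoothness).** For all `n ≥ 1`, `m ≥ 2`, `ℓ ≥ 1`, the hypersurface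
`X_{n,m,ℓ} = {t^ℓ(x₁²⋯xₙ²·z − y^m) = 1} ⊂ 𝔸^{n+3}` is smooth, i.e. its coordinate ring
`R_{n,m,ℓ}` is a smooth `ℂ`-algebra. -/
theorem negKodairaRing_smooth (n m ℓ : ℕ) (hn : 1 ≤ n) (hm : 2 ≤ m) (hℓ : 1 ≤ ℓ) :
    Algebra.Smooth ℂ (negKodairaRing n m ℓ) :=
  negKodairaRing_smooth_general n m ℓ hℓ
end

section
/- Let A₁ = ℂ[x,y,t]/(t(x² + y⁵) − 1) and A₃ = ℂ[x,y,t]/(t³(x² + y⁵) − 1). Then the ℂ-algebras A₁ ⊗_ℂ A₁ and A₃ ⊗_ℂ A₃ are isomorphic (although A₁ and A₃ are not isomorphic). -/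
/-!
`x² + y⁵` is weighted homogeneous: `(x, y) ↦ (u⁵ x, u² y)` multiplies it by `u¹⁰`. In
`A_m ⊗ A_m` both `tᵢ` are units, so integer matrices `A`, `B` define an algebra map
`A_ℓ ⊗ A_ℓ → A_m ⊗ A_m` by `xᵢ ↦ t^(5 Aᵢ) xᵢ`, `yᵢ ↦ t^(2 Aᵢ) yᵢ`, `tᵢ ↦ t^Bᵢ`, where
`t^k = t₁^k₁ t₂^k₂` and `Aᵢ`, `Bᵢ` are rows; it respects `tᵢ^ℓ (xᵢ² + yᵢ⁵) = 1` as soon as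
`ℓ B + 10 A = m`. Following the map of `(A, B)` by that of `(C, D)` gives the map of
`(A D + C, B D)`, and `(0, 1)` gives the identity, so a unimodular `B` yields an isomorphism,
with inverse given by `(-A B⁻¹, B⁻¹)`. For `ℓ = 1`, `m = 3` take `B = [[3, 10], [10, 33]]`.
-/

open TensorProduct

/-- `A_ℓ = ℂ[x,y,t]/(t^ℓ(x² + y⁵) - 1)`, the coordinate ring of the surface
`X_ℓ ⊂ 𝔸³` defined by `t^ℓ(x² + y⁵) = 1`. -/
noncomputable abbrev surfaceRing25 (ℓ : ℕ) : Type :=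
  MvPolynomial (Fin 3) ℂ ⧸ Ideal.span
    {(MvPolynomial.X 2 : MvPolynomial (Fin 3) ℂ) ^ ℓ *
      ((MvPolynomial.X 0) ^ 2 + (MvPolynomial.X 1) ^ 5) - 1}

open scoped Matrix

section ZPowMonomial

variable {ι G : Type*} [Fintype ι] [CommGroup G]

def zpowMonomial (u : ι → G) (k : ι → ℤ) : G := ∏ i, u i ^ k i

theorem zpowMonomial_zero (u : ι → G) : zpowMonomial u 0 = 1 := by
  simp [zpowMonomial]

theorem zpowMonomial_add (u : ι → G) (k k' : ι → ℤ) :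
    zpowMonomial u (k + k') = zpowMonomial u k * zpowMonomial u k' := by
  simp only [zpowMonomial, Pi.add_apply, zpow_add, Finset.prod_mul_distrib]

theorem zpowMonomial_pow (u : ι → G) (k : ι → ℤ) (n : ℕ) :
    zpowMonomial u k ^ n = zpowMonomial u (n • k) := by
  rw [zpowMonomial, ← zpow_natCast, ← Finset.prod_zpow]
  simp only [zpowMonomial, ← zpow_mul, Pi.smul_apply, nsmul_eq_mul, mul_comm]

theorem zpowMonomial_single [DecidableEq ι] (u : ι → G) (i : ι) (n : ℤ) :
    zpowMonomial u (Pi.single i n) = u i ^ n := by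
  rw [zpowMonomial, Finset.prod_eq_single i (fun j _ hj => by simp [hj]) (by simp)]
  simp

theorem zpowMonomial_smul_one [DecidableEq ι] (u : ι → G) (n : ℕ) (i : ι) :
    zpowMonomial u ((n • (1 : Matrix ι ι ℤ)) i) = u i ^ (n : ℤ) := by
  have : (n • (1 : Matrix ι ι ℤ)) i = Pi.single i (n : ℤ) := by
    ext j
    simp [Matrix.one_eq_pi_single, Pi.single_apply]
  rw [this, zpowMonomial_single]

theorem map_zpowMonomial {H : Type*} [CommGroup H] (φ : G →* H) (u : ι → G) (k : ι → ℤ) :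
    φ (zpowMonomial u k) = zpowMonomial (fun i => φ (u i)) k := by
  simp [zpowMonomial]

theorem zpowMonomial_zpowMonomial (u : ι → G) (D : Matrix ι ι ℤ) (k : ι → ℤ) :
    zpowMonomial (fun j => zpowMonomial u (D j)) k = zpowMonomial u (k ᵥ* D) := by
  have zpow_sum (a : G) (s : Finset ι) (f : ι → ℤ) : a ^ (∑ i ∈ s, f i) = ∏ i ∈ s, a ^ f i := by
    induction s using Finset.cons_induction with
    | empty => simp
    | cons j s hj ih => rw [Finset.sum_cons, Finset.prod_cons, zpow_add, ih]
  simp only [zpowMonomial, ← Finset.prod_zpow, ← zpow_mul, Matrix.vecMul, dotProduct, zpow_sum]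
  rw [Finset.prod_comm]
  simp only [mul_comm, zpow_mul]

end ZPowMonomial

theorem rescale_pow_mul_eq_one {S : Type*} [CommRing S] {ℓ m : ℕ} {a b c s u : S}
    (h : c ^ m * (a ^ 2 + b ^ 5) = 1) (hsu : s ^ ℓ * u ^ 10 = c ^ m) :
    s ^ ℓ * ((u ^ 5 * a) ^ 2 + (u ^ 2 * b) ^ 5) = 1 := by
  linear_combination (a ^ 2 + b ^ 5) * hsu + h

namespace surfaceRing25

open MvPolynomial Algebra.TensorProduct

noncomputable section

-- Instance search does not see through the abbreviation once it sits inside a tensor product.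
instance (ℓ : ℕ) : CommRing (surfaceRing25 ℓ) := Ideal.Quotient.commRing _

section Generators

variable (ℓ : ℕ)

def x : surfaceRing25 ℓ := Ideal.Quotient.mk _ (X 0)
def y : surfaceRing25 ℓ := Ideal.Quotient.mk _ (X 1)
def t : surfaceRing25 ℓ := Ideal.Quotient.mk _ (X 2)

theorem t_pow_mul : t ℓ ^ ℓ * (x ℓ ^ 2 + y ℓ ^ 5) = 1 := by
  rw [← sub_eq_zero]
  exact Ideal.Quotient.eq_zero_iff_mem.mpr (Ideal.subset_span rfl)

variable {ℓ} {S : Type*} [CommRing S] [Algebra ℂ S]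

def lift (a b c : S) (h : c ^ ℓ * (a ^ 2 + b ^ 5) = 1) : surfaceRing25 ℓ →ₐ[ℂ] S :=
  Ideal.Quotient.liftₐ _ (aeval ![a, b, c]) fun p hp => by
    obtain ⟨q, rfl⟩ := Ideal.mem_span_singleton'.mp hp
    simp [h]

variable (a b c : S) (h : c ^ ℓ * (a ^ 2 + b ^ 5) = 1)

@[simp] theorem lift_x : lift a b c h (x ℓ) = a := by
  show aeval ![a, b, c] (X 0) = a
  simp

@[simp] theorem lift_y : lift a b c h (y ℓ) = b := by
  show aeval ![a, b, c] (X 1) = b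
  simp

@[simp] theorem lift_t : lift a b c h (t ℓ) = c := by
  show aeval ![a, b, c] (X 2) = c
  simp

theorem algHom_ext {φ ψ : surfaceRing25 ℓ →ₐ[ℂ] S} (hx : φ (x ℓ) = ψ (x ℓ))
    (hy : φ (y ℓ) = ψ (y ℓ)) (ht : φ (t ℓ) = ψ (t ℓ)) : φ = ψ := by
  refine Ideal.Quotient.algHom_ext ℂ (MvPolynomial.algHom_ext fun i => ?_)
  fin_cases i <;> assumption

def tUnit (hℓ : ℓ ≠ 0) : (surfaceRing25 ℓ)ˣ where
  val := t ℓ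
  inv := t ℓ ^ (ℓ - 1) * (x ℓ ^ 2 + y ℓ ^ 5)
  val_inv := by
    rw [← mul_assoc, ← pow_succ', Nat.sub_add_cancel (Nat.one_le_iff_ne_zero.mpr hℓ), t_pow_mul]
  inv_val := by
    rw [mul_comm, ← mul_assoc, ← pow_succ', Nat.sub_add_cancel (Nat.one_le_iff_ne_zero.mpr hℓ),
      t_pow_mul]

end Generators

section Square

variable {ℓ m n : ℕ}

def incl (ℓ : ℕ) : Fin 2 → (surfaceRing25 ℓ →ₐ[ℂ] surfaceRing25 ℓ ⊗[ℂ] surfaceRing25 ℓ) :=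
  ![includeLeft, includeRight]

theorem tensor_algHom_ext {S : Type*} [CommRing S] [Algebra ℂ S]
    {φ ψ : surfaceRing25 ℓ ⊗[ℂ] surfaceRing25 ℓ →ₐ[ℂ] S}
    (h : ∀ i, φ.comp (incl ℓ i) = ψ.comp (incl ℓ i)) : φ = ψ :=
  Algebra.TensorProduct.ext (h 0) (h 1)

def inclTUnit (hm : m ≠ 0) (i : Fin 2) : (surfaceRing25 m ⊗[ℂ] surfaceRing25 m)ˣ :=
  Units.map (incl m i) (tUnit hm)

@[simp] theorem val_inclTUnit (hm : m ≠ 0) (i : Fin 2) :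
    (inclTUnit hm i : surfaceRing25 m ⊗[ℂ] surfaceRing25 m) = incl m i (t m) :=
  rfl

theorem inclTUnit_pow_mul (hm : m ≠ 0) (i : Fin 2) :
    (inclTUnit hm i : surfaceRing25 m ⊗[ℂ] surfaceRing25 m) ^ m *
      (incl m i (x m) ^ 2 + incl m i (y m) ^ 5) = 1 := by
  rw [val_inclTUnit, ← map_pow, ← map_pow, ← map_pow, ← map_add, ← map_mul, t_pow_mul, map_one]

section Rescale

variable (hm : m ≠ 0) (A B : Matrix (Fin 2) (Fin 2) ℤ)

def rescaleComponent (hAB : ℓ • B + 10 • A = m • 1) (i : Fin 2) :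
    surfaceRing25 ℓ →ₐ[ℂ] surfaceRing25 m ⊗[ℂ] surfaceRing25 m :=
  lift (↑(zpowMonomial (inclTUnit hm) (A i)) ^ 5 * incl m i (x m))
    (↑(zpowMonomial (inclTUnit hm) (A i)) ^ 2 * incl m i (y m))
    ↑(zpowMonomial (inclTUnit hm) (B i)) <| by
      refine rescale_pow_mul_eq_one (inclTUnit_pow_mul hm i) ?_
      rw [← Units.val_pow_eq_pow_val, ← Units.val_pow_eq_pow_val, ← Units.val_mul,
        ← Units.val_pow_eq_pow_val, zpowMonomial_pow, zpowMonomial_pow, ← zpowMonomial_add,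
        show ℓ • B i + 10 • A i = (m • (1 : Matrix _ _ ℤ)) i from congrFun hAB i,
        zpowMonomial_smul_one, zpow_natCast]

def rescale (hAB : ℓ • B + 10 • A = m • 1) :
    surfaceRing25 ℓ ⊗[ℂ] surfaceRing25 ℓ →ₐ[ℂ] surfaceRing25 m ⊗[ℂ] surfaceRing25 m :=
  productMap (rescaleComponent hm A B hAB 0) (rescaleComponent hm A B hAB 1)

variable {A B} (hAB : ℓ • B + 10 • A = m • 1) (i : Fin 2)

theorem rescale_comp_incl :
    (rescale hm A B hAB).comp (incl ℓ i) = rescaleComponent hm A B hAB i := by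
  fin_cases i
  exacts [productMap_left _ _, productMap_right _ _]

@[simp] theorem rescale_incl_x : rescale hm A B hAB (incl ℓ i (x ℓ)) =
    ↑(zpowMonomial (inclTUnit hm) (A i)) ^ 5 * incl m i (x m) := by
  rw [← AlgHom.comp_apply, rescale_comp_incl, rescaleComponent, lift_x]

@[simp] theorem rescale_incl_y : rescale hm A B hAB (incl ℓ i (y ℓ)) =
    ↑(zpowMonomial (inclTUnit hm) (A i)) ^ 2 * incl m i (y m) := by
  rw [← AlgHom.comp_apply, rescale_comp_incl, rescaleComponent, lift_y]

@[simp] theorem rescale_incl_t : rescale hm A B hAB (incl ℓ i (t ℓ)) =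
    ↑(zpowMonomial (inclTUnit hm) (B i)) := by
  rw [← AlgHom.comp_apply, rescale_comp_incl, rescaleComponent, lift_t]

end Rescale

theorem rescale_zpowMonomial_inclTUnit (hℓ : ℓ ≠ 0) (hm : m ≠ 0) {A B : Matrix (Fin 2) (Fin 2) ℤ}
    (hAB : ℓ • B + 10 • A = m • 1) (k : Fin 2 → ℤ) :
    rescale hm A B hAB ↑(zpowMonomial (inclTUnit hℓ) k) =
      ↑(zpowMonomial (inclTUnit hm) (k ᵥ* B)) := by
  let φ : (surfaceRing25 ℓ ⊗[ℂ] surfaceRing25 ℓ)ˣ →* (surfaceRing25 m ⊗[ℂ] surfaceRing25 m)ˣ :=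
    Units.map (rescale hm A B hAB : _ →* _)
  have hφ : ∀ j, φ (inclTUnit hℓ j) = zpowMonomial (inclTUnit hm) (B j) :=
    fun j => Units.ext (rescale_incl_t hm hAB j)
  have h := congrArg Units.val
    (map_zpowMonomial (H := (surfaceRing25 m ⊗[ℂ] surfaceRing25 m)ˣ) φ (inclTUnit hℓ) k)
  simp only [hφ, zpowMonomial_zpowMonomial] at h
  exact h

theorem rescale_comp (hm : m ≠ 0) (hn : n ≠ 0) {A B C D : Matrix (Fin 2) (Fin 2) ℤ}
    (hAB : ℓ • B + 10 • A = m • 1) (hCD : m • D + 10 • C = n • 1) :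
    (rescale hn C D hCD).comp (rescale hm A B hAB) =
      rescale hn (A * D + C) (B * D) (by
        rw [← hCD, smul_add, ← add_assoc, ← smul_mul_assoc, ← smul_mul_assoc, ← add_mul, hAB,
          smul_mul_assoc, one_mul]) := by
  have row_mul (M : Matrix (Fin 2) (Fin 2) ℤ) (i : Fin 2) : (M * D) i = M i ᵥ* D := rfl
  have row_add (i : Fin 2) : (A * D + C) i = A i ᵥ* D + C i := rfl
  refine tensor_algHom_ext fun i => algHom_ext ?_ ?_ ?_ <;>
    simp only [AlgHom.comp_apply, rescale_incl_x, rescale_incl_y, rescale_incl_t, map_mul, map_pow,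
      rescale_zpowMonomial_inclTUnit, row_add, row_mul, zpowMonomial_add, Units.val_mul, mul_pow,
      mul_assoc]

theorem rescale_eq_id (hℓ : ℓ ≠ 0) {A B : Matrix (Fin 2) (Fin 2) ℤ} (hAB : ℓ • B + 10 • A = ℓ • 1)
    (hA : A = 0) (hB : B = 1) : rescale hℓ A B hAB = AlgHom.id ℂ _ := by
  subst hA hB
  have row_zero (i : Fin 2) : (0 : Matrix (Fin 2) (Fin 2) ℤ) i = 0 := rfl
  refine tensor_algHom_ext fun i => algHom_ext ?_ ?_ ?_
  · simp [row_zero, zpowMonomial_zero]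
  · simp [row_zero, zpowMonomial_zero]
  · simpa using congrArg Units.val (zpowMonomial_smul_one (inclTUnit hℓ) 1 i)

def rescaleEquiv (hℓ : ℓ ≠ 0) (hm : m ≠ 0) (A B D : Matrix (Fin 2) (Fin 2) ℤ)
    (hAB : ℓ • B + 10 • A = m • 1) (hBD : B * D = 1) :
    (surfaceRing25 ℓ ⊗[ℂ] surfaceRing25 ℓ) ≃ₐ[ℂ] (surfaceRing25 m ⊗[ℂ] surfaceRing25 m) :=
  have hDB : D * B = 1 := mul_eq_one_comm.mp hBD
  have hinv : m • D + 10 • -(A * D) = ℓ • 1 := by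
    rw [← hBD, ← smul_mul_assoc, eq_sub_of_add_eq hAB, sub_mul, smul_mul_assoc, smul_mul_assoc,
      one_mul, smul_neg, sub_eq_add_neg]
  AlgEquiv.ofAlgHom (rescale hm A B hAB) (rescale hℓ (-(A * D)) D hinv)
    (by rw [rescale_comp, rescale_eq_id] <;> simp [Matrix.mul_assoc, hDB])
    (by rw [rescale_comp, rescale_eq_id] <;> simp [hBD])

end Square

end

end surfaceRing25

/-- **Proposition (surfaces with isomorphic squares).** The squares `X₁ × X₁` and
`X₃ × X₃` of the (nonisomorphic) surfaces `X₁ = {t(x² + y⁵) = 1}` and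
`X₃ = {t³(x² + y⁵) = 1}` are isomorphic: the `ℂ`-algebras `A₁ ⊗_ℂ A₁` and
`A₃ ⊗_ℂ A₃` are isomorphic. -/
theorem case25_squares_iso :
    Nonempty ((surfaceRing25 1 ⊗[ℂ] surfaceRing25 1) ≃ₐ[ℂ]
      (surfaceRing25 3 ⊗[ℂ] surfaceRing25 3)) :=
  ⟨surfaceRing25.rescaleEquiv one_ne_zero three_ne_zero
    !![0, -1; -1, -3] !![3, 10; 10, 33] !![-33, 10; 10, -3] (by decide) (by decide)⟩
end
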